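/- arXiv:1903.02099 — 2 statements merged into one kernel-verified Lean document; each statement's English description precedes it below -/
import Mathlib

section
/- (Gallai–Roy) If G is a graph with chromatic number k+1, then every orientation of G contains a directed path with k edges (i.e., on k+1 vertices). -/
/-!
Let `D` be a maximal acyclic subdigraph of the orientation `R` (Zorn's lemma). If `R` has
no directed path with `k` arcs, neither has `D`, and since walks in `D` are paths, colouring
each vertex by the length of a longest `D`-walk from it uses only the colours `0, …, k - 1`.
This colouring is proper: arcs of `D` strictly decrease it, and every other arc `u → v` of
`R` would close a cycle in `D`, so a `D`-path runs from `v` back to `u` and the colour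
strictly increases along the arc. Hence `χ(G) ≤ k`.
-/

/-- `R` is an orientation of the simple graph `G`: every directed edge lies on an
edge of `G`, every edge of `G` is directed one way, and no edge is directed both ways. -/
def IsOrientation {V : Type*} (G : SimpleGraph V) (R : V → V → Prop) : Prop :=
  (∀ u v, R u v → G.Adj u v) ∧ (∀ u v, G.Adj u v → R u v ∨ R v u) ∧
    (∀ u v, R u v → ¬ R v u)

/-- The digraph `R` contains a copy of the digraph `S`. -/
def HasCopy {V W : Type*} (R : V → V → Prop) (S : W → W → Prop) : Prop :=
  ∃ f : W → V, Function.Injective f ∧ ∀ a b, S a b → R (f a) (f b)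

/-- A digraph is acyclic if it has no directed cycle. -/
def DigraphAcyclic {V : Type*} (R : V → V → Prop) : Prop :=
  ∀ v, ¬ Relation.TransGen R v v

/-- `G → S` : every orientation of `G` contains a copy of the oriented graph `S`. -/
def ArrowsOriented {V W : Type*} (G : SimpleGraph V) (S : W → W → Prop) : Prop :=
  ∀ R : V → V → Prop, IsOrientation G R → HasCopy R S

/-- The oriented Ramsey number of an oriented graph `S`. -/
noncomputable def orientedRamsey {W : Type*} (S : W → W → Prop) : ℕ :=
  sInf {n : ℕ | ∃ G : SimpleGraph (Fin n), ArrowsOriented G S}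

namespace DigraphAcyclic

variable {V : Type*}

theorem sSup_of_isChain {c : Set (V → V → Prop)} (hc : IsChain (· ≤ ·) c)
    (hac : ∀ D ∈ c, DigraphAcyclic D) : DigraphAcyclic (sSup c) := by
  have key : ∀ x y, Relation.TransGen (sSup c) x y → ∃ D ∈ c, Relation.TransGen D x y := by
    intro x y hxy
    induction hxy with
    | single hxy =>
      obtain ⟨D, hD, hxy⟩ : ∃ D ∈ c, D _ _ := by simpa using hxy
      exact ⟨D, hD, .single hxy⟩
    | tail _ hyz ih =>
      obtain ⟨D₁, hD₁, hxy⟩ := ih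
      obtain ⟨D₂, hD₂, hyz⟩ : ∃ D ∈ c, D _ _ := by simpa using hyz
      rcases hc.total hD₁ hD₂ with h₁₂ | h₂₁
      · exact ⟨D₂, hD₂, (Relation.TransGen.mono h₁₂ _ _ hxy).tail hyz⟩
      · exact ⟨D₁, hD₁, hxy.tail (h₂₁ _ _ hyz)⟩
  intro v hv
  obtain ⟨D, hD, hcycle⟩ := key v v hv
  exact hac D hD v hcycle

theorem reflTransGen_of_cycle_add_arc {D : V → V → Prop} (hD : DigraphAcyclic D) {u v w : V}
    (h : Relation.TransGen (fun a b => D a b ∨ (a = u ∧ b = v)) w w) :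
    Relation.ReflTransGen D v u := by
  have key : ∀ x y, Relation.TransGen (fun a b => D a b ∨ (a = u ∧ b = v)) x y →
      Relation.TransGen D x y ∨
        (Relation.ReflTransGen D x u ∧ Relation.ReflTransGen D v y) := by
    intro x y hxy
    induction hxy with
    | single hxy =>
      rcases hxy with hxy | ⟨rfl, rfl⟩
      · exact .inl (.single hxy)
      · exact .inr ⟨.refl, .refl⟩
    | tail _ hyz ih =>
      rcases hyz with hyz | ⟨rfl, rfl⟩
      · rcases ih with hxy | ⟨hxu, hvy⟩
        · exact .inl (hxy.tail hyz)
        · exact .inr ⟨hxu, hvy.tail hyz⟩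
      · rcases ih with hxy | ⟨hxu, -⟩
        · exact .inr ⟨hxy.to_reflTransGen, .refl⟩
        · exact .inr ⟨hxu, .refl⟩
  rcases key w w h with hcycle | ⟨hwu, hvw⟩
  · exact absurd hcycle (hD w)
  · exact hvw.trans hwu

end DigraphAcyclic

theorem exists_maximal_acyclic_le {V : Type*} (R : V → V → Prop) :
    ∃ D ≤ R, DigraphAcyclic D ∧ ∀ u v, R u v → ¬ D u v → Relation.ReflTransGen D v u := by
  obtain ⟨D, ⟨hDR, hDac⟩, hDmax⟩ :=
    zorn_le₀ {D : V → V → Prop | D ≤ R ∧ DigraphAcyclic D} fun c hc hchain =>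
      ⟨sSup c, ⟨sSup_le fun D hD => (hc hD).1,
        DigraphAcyclic.sSup_of_isChain hchain fun D hD => (hc hD).2⟩,
        fun _ hD => le_sSup hD⟩
  refine ⟨D, hDR, hDac, fun u v huv hDuv => ?_⟩
  set D' : V → V → Prop := fun a b => D a b ∨ (a = u ∧ b = v)
  have hD'R : D' ≤ R := by
    rintro a b (hab | ⟨rfl, rfl⟩)
    exacts [hDR a b hab, huv]
  have hD'cyclic : ¬ DigraphAcyclic D' := fun hD'ac =>
    hDuv (hDmax ⟨hD'R, hD'ac⟩ (fun a b => Or.inl) u v (.inr ⟨rfl, rfl⟩))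
  obtain ⟨w, hw⟩ : ∃ w, Relation.TransGen D' w w := by
    simpa [DigraphAcyclic] using hD'cyclic
  exact hDac.reflTransGen_of_cycle_add_arc hw

section Walks

variable {V : Type*} {D R : V → V → Prop}

def HasWalkFrom (D : V → V → Prop) (v : V) (n : ℕ) : Prop :=
  ∃ g : ℕ → V, g 0 = v ∧ ∀ i < n, D (g i) (g (i + 1))

theorem hasWalkFrom_zero (D : V → V → Prop) (v : V) : HasWalkFrom D v 0 :=
  ⟨fun _ => v, rfl, fun _ hi => absurd hi (Nat.not_lt_zero _)⟩

theorem HasWalkFrom.cons {u v : V} {n : ℕ} (huv : D u v) (hw : HasWalkFrom D v n) :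
    HasWalkFrom D u (n + 1) := by
  obtain ⟨g, rfl, hg⟩ := hw
  refine ⟨fun i => Nat.casesOn i u g, rfl, fun i hi => ?_⟩
  cases i with
  | zero => exact huv
  | succ i => exact hg i (by omega)

theorem HasWalkFrom.mono {v : V} {m n : ℕ} (hmn : m ≤ n) (hw : HasWalkFrom D v n) :
    HasWalkFrom D v m := by
  obtain ⟨g, hg0, hg⟩ := hw
  exact ⟨g, hg0, fun i hi => hg i (by omega)⟩

theorem transGen_of_walk {g : ℕ → V} {n : ℕ} (hg : ∀ i < n, D (g i) (g (i + 1)))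
    {i j : ℕ} (hij : i < j) (hjn : j ≤ n) : Relation.TransGen D (g i) (g j) := by
  induction j, hij using Nat.le_induction with
  | base => exact .single (hg i (by omega))
  | succ j hij ih => exact (ih (by omega)).tail (hg j (by omega))

theorem DigraphAcyclic.hasCopy_path_of_hasWalkFrom (hD : DigraphAcyclic D) (hDR : D ≤ R)
    {v : V} {k : ℕ} (hw : HasWalkFrom D v k) :
    HasCopy R (fun i j : Fin (k + 1) => (i : ℕ) + 1 = (j : ℕ)) := by
  obtain ⟨g, -, hg⟩ := hw
  have hne : ∀ i j : ℕ, i < j → j ≤ k → g i ≠ g j := fun i j hij hjk heq =>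
    hD (g j) (by simpa only [heq] using transGen_of_walk hg hij hjk)
  refine ⟨fun i => g i, fun i j hij => ?_, fun i j hij => ?_⟩
  · by_contra hne_ij
    rcases lt_or_gt_of_ne (Fin.val_ne_of_ne hne_ij) with hlt | hlt
    · exact hne i j hlt (by omega) hij
    · exact hne j i hlt (by omega) hij.symm
  · simpa only [← hij] using hDR _ _ (hg i (by omega))

theorem exists_height_of_walks_lt {k : ℕ} (hk : ∀ v n, HasWalkFrom D v n → n < k) :
    ∃ f : V → ℕ, (∀ v, f v < k) ∧ ∀ a b, D a b → f b < f a := by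
  have hbdd : ∀ v, BddAbove {n | HasWalkFrom D v n} :=
    fun v => ⟨k, fun n hn => (hk v n hn).le⟩
  have hwalk : ∀ v, HasWalkFrom D v (sSup {n | HasWalkFrom D v n}) :=
    fun v => Nat.sSup_mem ⟨0, hasWalkFrom_zero D v⟩ (hbdd v)
  exact ⟨fun v => sSup {n | HasWalkFrom D v n}, fun v => hk v _ (hwalk v),
    fun a b hab => Nat.lt_of_succ_le (le_csSup (hbdd a) ((hwalk b).cons hab))⟩

end Walks

theorem IsOrientation.colorable_of_maximal_acyclic {V : Type*} {G : SimpleGraph V}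
    {R D : V → V → Prop} (hR : IsOrientation G R)
    (hDmax : ∀ u v, R u v → ¬ D u v → Relation.ReflTransGen D v u) {k : ℕ}
    (hk : ∀ v n, HasWalkFrom D v n → n < k) : G.Colorable k := by
  obtain ⟨f, hfk, hf⟩ := exists_height_of_walks_lt hk
  have hf_trans : ∀ a b, Relation.TransGen D a b → f b < f a := fun a b hab => by
    induction hab with
    | single hab => exact hf _ _ hab
    | tail _ hbc ih => exact (hf _ _ hbc).trans ih
  have hR_ne : ∀ u v, R u v → f u ≠ f v := by
    intro u v huv
    by_cases hDuv : D u v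
    · exact (hf u v hDuv).ne'
    · rcases Relation.reflTransGen_iff_eq_or_transGen.mp (hDmax u v huv hDuv) with hvu | hvu
      · exact absurd hvu ((hR.1 u v huv).ne)
      · exact (hf_trans v u hvu).ne
  refine ⟨.mk (fun v => ⟨f v, hfk v⟩) fun {u v} hadj heq => ?_⟩
  rcases hR.2.1 u v hadj with huv | hvu
  · exact hR_ne u v huv (Fin.val_eq_of_eq heq)
  · exact hR_ne v u hvu (Fin.val_eq_of_eq heq).symm

/-- Gallai–Roy: if `χ(G) = k+1` then every orientation of `G` contains a directed
path with `k` edges (on `k+1` vertices). -/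
theorem stmt_4 {V : Type*} (G : SimpleGraph V) (k : ℕ)
    (hchi : G.chromaticNumber = (k + 1 : ℕ)) :
    ∀ R : V → V → Prop, IsOrientation G R →
      HasCopy R (fun i j : Fin (k + 1) => (i : ℕ) + 1 = (j : ℕ)) := by
  intro R hR
  by_contra hcopy
  obtain ⟨D, hDR, hDac, hDmax⟩ := exists_maximal_acyclic_le R
  have hk : ∀ v n, HasWalkFrom D v n → n < k := fun v n hw => by
    by_contra! hkn
    exact hcopy (hDac.hasCopy_path_of_hasWalkFrom hDR (hw.mono hkn))
  have hle := (hR.colorable_of_maximal_acyclic hDmax hk).chromaticNumber_le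
  rw [hchi] at hle
  exact absurd (by exact_mod_cast hle : k + 1 ≤ k) (Nat.not_succ_le_self k)
end

section
/- Let N be such that the ordered complete graph K_N arrows (in the ordered Ramsey sense, for 2 colorings) the ordered graph F consisting of two disjoint copies of an acyclic oriented graph H⃗, one with edges oriented forward along the order and one with edges oriented backward. Then every orientation of K_N contains a copy of H⃗. -/
/-- If the ordered complete graph `K_N` arrows (for 2-colorings) the ordered graph
`F` consisting of a forward-oriented copy and a backward-oriented copy of the
acyclic oriented graph `S`, then every orientation of `K_N` contains a copy of `S`. -/
theorem stmt_7 (h N : ℕ) (S : Fin h → Fin h → Prop) (hacyc : DigraphAcyclic S)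
    (T : Fin h × Bool → Fin h × Bool → Prop)
    (hT : ∀ x y, T x y ↔ ((x.2 = false ∧ y.2 = false ∧ S x.1 y.1) ∨
                          (x.2 = true ∧ y.2 = true ∧ S y.1 x.1)))
    (σ : Fin h × Bool → Fin (2 * h)) (hσinj : Function.Injective σ)
    (hσ : ∀ x y, T x y → σ x < σ y)
    (harrows : ∀ c : Fin N → Fin N → Bool, (∀ u v, c u v = c v u) →
      ∃ (f : Fin h × Bool → Fin N) (col : Bool),
        (∀ x y, σ x < σ y → f x < f y) ∧
        ∀ x y, T x y ∨ T y x → c (f x) (f y) = col) :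
    ∀ R : Fin N → Fin N → Prop,
      IsOrientation (⊤ : SimpleGraph (Fin N)) R → HasCopy R S := by
  classical
  rintro R ⟨hR1, hR2, hR3⟩
  set c : Fin N → Fin N → Bool := fun u v => decide (R (min u v) (max u v)) with hc
  have hsym : ∀ u v, c u v = c v u := by
    intro u v; simp [hc, min_comm, max_comm]
  obtain ⟨f, col, hmono, hcol⟩ := harrows c hsym
  have hfne : ∀ x y : Fin h × Bool, x ≠ y → f x ≠ f y := by
    intro x y hxy
    have hσne : σ x ≠ σ y := fun hh => hxy (hσinj hh)
    rcases lt_or_gt_of_ne hσne with hlt | hlt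
    · exact ne_of_lt (hmono _ _ hlt)
    · exact (ne_of_lt (hmono _ _ hlt)).symm
  cases col with
  | true =>
    refine ⟨fun a => f (a, false), ?_, ?_⟩
    · intro a b hab
      by_contra hne
      exact hfne (a, false) (b, false) (by simpa using hne) hab
    · intro a b hab
      have hT' : T (a, false) (b, false) := (hT _ _).2 (Or.inl ⟨rfl, rfl, hab⟩)
      have hlt : f (a, false) < f (b, false) := hmono _ _ (hσ _ _ hT')
      have := hcol (a, false) (b, false) (Or.inl hT')
      rw [hc] at this
      simp only [min_eq_left hlt.le, max_eq_right hlt.le, decide_eq_true_eq] at this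
      exact this
  | false =>
    refine ⟨fun a => f (a, true), ?_, ?_⟩
    · intro a b hab
      by_contra hne
      exact hfne (a, true) (b, true) (by simpa using hne) hab
    · intro a b hab
      have hT' : T (b, true) (a, true) := (hT _ _).2 (Or.inr ⟨rfl, rfl, hab⟩)
      have hlt : f (b, true) < f (a, true) := hmono _ _ (hσ _ _ hT')
      have := hcol (b, true) (a, true) (Or.inl hT')
      rw [hc] at this
      simp only [min_eq_left hlt.le, max_eq_right hlt.le, decide_eq_false_iff_not] at this
      have hadj : (⊤ : SimpleGraph (Fin N)).Adj (f (a, true)) (f (b, true)) := by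
        simpa using hlt.ne'
      rcases hR2 _ _ hadj with hr | hr
      · exact hr
      · exact absurd hr this
end
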